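/- arXiv:2412.10658 — 3 statements merged into one kernel-verified Lean document; each statement's English description precedes it below -/
import Mathlib

section
/- Let s₁, s₂, s₃ ∈ (0,1) be pairwise distinct and let (α, β, c), (α', β', c') ∈ ℝ³. If g(sᵢ; α, β, c) = g(sᵢ; α', β', c') for i = 1, 2, 3, then α = α', β = β', and c = c'. In other words, a function in the family g is uniquely determined by its values at any three distinct points of (0,1). -/
/-!
Since `1 / g(s; α, β, c) - 1 = s^{-α} (1 - s)^β e^c`, agreement of two members of the family at
`s` says that `a log s + b log (1 - s) + d` vanishes there, where `(a, b, d)` is the difference of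
the parameters `(-α, β, c)`. If it vanishes at three points, Rolle's theorem gives two distinct
zeros of its derivative `a / s - b / (1 - s)`, that is, of the affine function `a - (a + b) s`;
hence `a = b = 0`, and then `d = 0`.
-/

/-- The calibration-curve family `g(s; α, β, c) = 1/(1 + s^{−α}·(1−s)^{β}·e^{c})`. -/
noncomputable def calCurve (α β c s : ℝ) : ℝ :=
  1 / (1 + s ^ (-α) * (1 - s) ^ β * Real.exp c)

open Real Set

noncomputable def logBetaKernel (a b d s : ℝ) : ℝ :=
  a * log s + b * log (1 - s) + d

theorem log_inv_calCurve_sub_one (α β c : ℝ) {s : ℝ} (hs : s ∈ Ioo (0 : ℝ) 1) :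
    log ((calCurve α β c s)⁻¹ - 1) = logBetaKernel (-α) β c s := by
  have hs' : 0 < 1 - s := sub_pos.2 hs.2
  rw [calCurve, one_div, inv_inv, add_sub_cancel_left,
    log_mul (mul_pos (rpow_pos_of_pos hs.1 _) (rpow_pos_of_pos hs' _)).ne' (exp_ne_zero c),
    log_mul (rpow_pos_of_pos hs.1 _).ne' (rpow_pos_of_pos hs' _).ne',
    log_rpow hs.1, log_rpow hs', log_exp, logBetaKernel]

theorem hasDerivAt_logBetaKernel (a b d : ℝ) {t : ℝ} (ht : t ∈ Ioo (0 : ℝ) 1) :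
    HasDerivAt (logBetaKernel a b d) (a * t⁻¹ - b * (1 - t)⁻¹) t := by
  have hlog_one_sub : HasDerivAt (fun s => log (1 - s)) (-1 / (1 - t)) t := by
    simpa using ((hasDerivAt_id t).const_sub 1).log (sub_pos.2 ht.2).ne'
  exact ((((hasDerivAt_log ht.1.ne').const_mul a).add
    (hlog_one_sub.const_mul b)).add_const d).congr_deriv (by ring)

theorem exists_mul_one_sub_eq_mul_of_logBetaKernel_eq (a b d : ℝ) {u v : ℝ} (hu : 0 < u)
    (huv : u < v) (hv : v < 1) (h : logBetaKernel a b d u = logBetaKernel a b d v) :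
    ∃ t ∈ Ioo u v, a * (1 - t) = b * t := by
  have hsub : Icc u v ⊆ Ioo 0 1 := Icc_subset_Ioo hu hv
  have hderiv (t : ℝ) (ht : t ∈ Icc u v) :=
    hasDerivAt_logBetaKernel a b d (hsub ht)
  obtain ⟨t, ht, hzero⟩ := exists_hasDerivAt_eq_zero huv
    (fun t ht => (hderiv t ht).continuousAt.continuousWithinAt) h
    (fun t ht => hderiv t (Ioo_subset_Icc_self ht))
  have ht' : t ∈ Ioo 0 1 := hsub (Ioo_subset_Icc_self ht)
  have ht₀ : t ≠ 0 := ht'.1.ne'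
  have ht₁ : 1 - t ≠ 0 := (sub_pos.2 ht'.2).ne'
  refine ⟨t, ht, ?_⟩
  field_simp at hzero
  linarith

theorem eq_zero_of_mul_one_sub_eq_mul {K : Type*} [Field K] {a b t₁ t₂ : K} (ht : t₁ ≠ t₂)
    (h₁ : a * (1 - t₁) = b * t₁) (h₂ : a * (1 - t₂) = b * t₂) : a = 0 ∧ b = 0 := by
  have hab : a + b = 0 := by
    have : (a + b) * (t₂ - t₁) = 0 := by linear_combination h₁ - h₂
    exact (mul_eq_zero.1 this).resolve_right (sub_ne_zero.2 ht.symm)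
  have ha : a = 0 := by linear_combination h₁ + t₁ * hab
  exact ⟨ha, by linear_combination hab - ha⟩

theorem eq_zero_of_logBetaKernel_eq_zero_of_lt {a b d u v w : ℝ} (hu : 0 < u) (huv : u < v)
    (hvw : v < w) (hw : w < 1) (hu₀ : logBetaKernel a b d u = 0)
    (hv₀ : logBetaKernel a b d v = 0) (hw₀ : logBetaKernel a b d w = 0) :
    a = 0 ∧ b = 0 ∧ d = 0 := by
  obtain ⟨t₁, ht₁, h₁⟩ := exists_mul_one_sub_eq_mul_of_logBetaKernel_eq a b d hu huv
    (hvw.trans hw) (hu₀.trans hv₀.symm)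
  obtain ⟨t₂, ht₂, h₂⟩ := exists_mul_one_sub_eq_mul_of_logBetaKernel_eq a b d (hu.trans huv)
    hvw hw (hv₀.trans hw₀.symm)
  obtain ⟨ha, hb⟩ := eq_zero_of_mul_one_sub_eq_mul (ht₁.2.trans ht₂.1).ne h₁ h₂
  subst ha hb
  simpa [logBetaKernel] using hu₀

theorem eq_zero_of_logBetaKernel_eq_zero {a b d s₁ s₂ s₃ : ℝ}
    (hs₁ : s₁ ∈ Ioo (0 : ℝ) 1) (hs₂ : s₂ ∈ Ioo (0 : ℝ) 1) (hs₃ : s₃ ∈ Ioo (0 : ℝ) 1)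
    (h₁₂ : s₁ ≠ s₂) (h₁₃ : s₁ ≠ s₃) (h₂₃ : s₂ ≠ s₃)
    (e₁ : logBetaKernel a b d s₁ = 0) (e₂ : logBetaKernel a b d s₂ = 0)
    (e₃ : logBetaKernel a b d s₃ = 0) :
    a = 0 ∧ b = 0 ∧ d = 0 := by
  rcases h₁₂.lt_or_gt with h₁₂ | h₁₂ <;> rcases h₁₃.lt_or_gt with h₁₃ | h₁₃ <;>
    rcases h₂₃.lt_or_gt with h₂₃ | h₂₃
  · exact eq_zero_of_logBetaKernel_eq_zero_of_lt hs₁.1 h₁₂ h₂₃ hs₃.2 e₁ e₂ e₃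
  · exact eq_zero_of_logBetaKernel_eq_zero_of_lt hs₁.1 h₁₃ h₂₃ hs₂.2 e₁ e₃ e₂
  · exact absurd (h₁₂.trans h₂₃) h₁₃.not_gt
  · exact eq_zero_of_logBetaKernel_eq_zero_of_lt hs₃.1 h₁₃ h₁₂ hs₂.2 e₃ e₁ e₂
  · exact eq_zero_of_logBetaKernel_eq_zero_of_lt hs₂.1 h₁₂ h₁₃ hs₃.2 e₂ e₁ e₃
  · exact absurd (h₂₃.trans h₁₂) h₁₃.not_gt
  · exact eq_zero_of_logBetaKernel_eq_zero_of_lt hs₂.1 h₂₃ h₁₃ hs₁.2 e₂ e₃ e₁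
  · exact eq_zero_of_logBetaKernel_eq_zero_of_lt hs₃.1 h₂₃ h₁₂ hs₁.2 e₃ e₂ e₁

theorem logBetaKernel_sub_eq_zero_of_calCurve_eq {α β c α' β' c' s : ℝ}
    (hs : s ∈ Ioo (0 : ℝ) 1) (h : calCurve α β c s = calCurve α' β' c' s) :
    logBetaKernel (α' - α) (β - β') (c - c') s = 0 := by
  have hlog := congrArg (fun g => log (g⁻¹ - 1)) h
  simp only [log_inv_calCurve_sub_one _ _ _ hs, logBetaKernel] at hlog
  rw [logBetaKernel]
  linarith

/-- A function in the family `g(s; α, β, c)` is uniquely determined by its values at any three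
pairwise distinct points of `(0,1)`: if two members of the family agree at three such points,
their parameters coincide. -/
theorem calCurve_identifiable (s₁ s₂ s₃ : ℝ)
    (hs₁ : s₁ ∈ Set.Ioo (0:ℝ) 1) (hs₂ : s₂ ∈ Set.Ioo (0:ℝ) 1) (hs₃ : s₃ ∈ Set.Ioo (0:ℝ) 1)
    (h₁₂ : s₁ ≠ s₂) (h₁₃ : s₁ ≠ s₃) (h₂₃ : s₂ ≠ s₃)
    (α β c α' β' c' : ℝ)
    (h1 : calCurve α β c s₁ = calCurve α' β' c' s₁)
    (h2 : calCurve α β c s₂ = calCurve α' β' c' s₂)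
    (h3 : calCurve α β c s₃ = calCurve α' β' c' s₃) :
    α = α' ∧ β = β' ∧ c = c' := by
  obtain ⟨ha, hb, hd⟩ := eq_zero_of_logBetaKernel_eq_zero hs₁ hs₂ hs₃ h₁₂ h₁₃ h₂₃
    (logBetaKernel_sub_eq_zero_of_calCurve_eq hs₁ h1)
    (logBetaKernel_sub_eq_zero_of_calCurve_eq hs₂ h2)
    (logBetaKernel_sub_eq_zero_of_calCurve_eq hs₃ h3)
  exact ⟨(sub_eq_zero.1 ha).symm, sub_eq_zero.1 hb, sub_eq_zero.1 hd⟩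
end

section
/- Let s₁, s₂, s₃ ∈ (0,1) be pairwise distinct and let y₁, y₂, y₃ ∈ (0,1) be arbitrary. Then there exists a unique triple (α, β, c) ∈ ℝ³ such that g(sᵢ; α, β, c) = yᵢ for i = 1, 2, 3; equivalently, the linear system −α·ln(sᵢ) + β·ln(1−sᵢ) + c = ln(1/yᵢ − 1), i = 1, 2, 3, has a unique solution (α, β, c). -/
/-!
Taking `log (1/g - 1)` turns the interpolation conditions into a linear system in `(α, β, c)`
whose coefficient rows are `(-log sᵢ, log (1 - sᵢ), 1)`. It is uniquely solvable unless the
three points `(log sᵢ, log (1 - sᵢ))` are collinear. They are not: they lie on the graph of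
`u ↦ log (1 - exp u)`, which is strictly concave on `u < 0`, and a strictly concave graph meets
a line in at most two points.
-/

open Real Set

theorem StrictConcaveOn.sub_mul_sub_ne {𝕜 : Type*} [Field 𝕜] [LinearOrder 𝕜]
    [IsStrictOrderedRing 𝕜] {s : Set 𝕜} {f : 𝕜 → 𝕜} (hf : StrictConcaveOn 𝕜 s f) {a x y : 𝕜}
    (ha : a ∈ s) (hx : x ∈ s) (hy : y ∈ s) (hxa : x ≠ a) (hya : y ≠ a) (hxy : x ≠ y) :
    (x - a) * (f y - f a) ≠ (y - a) * (f x - f a) := by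
  have hslope : (f x - f a) / (x - a) ≠ (f y - f a) / (y - a) := by
    rcases hxy.lt_or_gt with h | h
    · exact (hf.secant_strict_mono ha hx hy hxa hya h).ne'
    · exact (hf.secant_strict_mono ha hy hx hya hxa h).ne
  rw [Ne, div_eq_div_iff (sub_ne_zero.2 hxa) (sub_ne_zero.2 hya)] at hslope
  exact fun h => hslope (by linear_combination -h)

theorem existsUnique_affine_interpolation {K : Type*} [Field K] {x₁ x₂ x₃ y₁ y₂ y₃ z₁ z₂ z₃ : K}
    (hD : (x₂ - x₁) * (y₃ - y₁) ≠ (x₃ - x₁) * (y₂ - y₁)) :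
    ∃! t : K × K × K,
      t.1 * x₁ + t.2.1 * y₁ + t.2.2 = z₁ ∧
      t.1 * x₂ + t.2.1 * y₂ + t.2.2 = z₂ ∧
      t.1 * x₃ + t.2.1 * y₃ + t.2.2 = z₃ := by
  have hD' : (x₂ - x₁) * (y₃ - y₁) - (x₃ - x₁) * (y₂ - y₁) ≠ 0 := sub_ne_zero.2 hD
  set D := (x₂ - x₁) * (y₃ - y₁) - (x₃ - x₁) * (y₂ - y₁)
  -- Cramer's rule for the system reduced by subtracting the first equation
  set a := ((z₂ - z₁) * (y₃ - y₁) - (z₃ - z₁) * (y₂ - y₁)) / D with ha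
  set b := ((x₂ - x₁) * (z₃ - z₁) - (x₃ - x₁) * (z₂ - z₁)) / D with hb
  refine ⟨(a, b, z₁ - a * x₁ - b * y₁), ⟨by ring, ?_, ?_⟩, ?_⟩
  · simp only [ha, hb]; field_simp; ring
  · simp only [ha, hb]; field_simp; ring
  rintro ⟨a', b', c'⟩ ⟨e₁, e₂, e₃⟩
  dsimp only at e₁ e₂ e₃
  have ha' : a' = a := by
    rw [ha, eq_div_iff hD']
    linear_combination (y₃ - y₁) * (e₂ - e₁) - (y₂ - y₁) * (e₃ - e₁)
  have hb' : b' = b := by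
    rw [hb, eq_div_iff hD']
    linear_combination (x₂ - x₁) * (e₃ - e₁) - (x₃ - x₁) * (e₂ - e₁)
  have hc' : c' = z₁ - a * x₁ - b * y₁ := by rw [← ha', ← hb']; linear_combination e₁
  rw [ha', hb', hc']

theorem image_one_sub_exp_Iio_zero : (fun u : ℝ => 1 - exp u) '' Iio 0 = Ioo 0 1 := by
  rw [← image_image (fun x : ℝ => 1 - x) exp, image_exp_Iio, exp_zero]
  simp

theorem strictConcaveOn_log_one_sub_exp :
    StrictConcaveOn ℝ (Iio 0) (fun u => log (1 - exp u)) := by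
  have hsub : StrictConcaveOn ℝ (Iio 0) (fun u : ℝ => 1 - exp u) := by
    have h := (strictConvexOn_exp.subset (subset_univ _) (convex_Iio 0)).neg.add_const 1
    rwa [show -exp + (fun _ => 1) = fun u => 1 - exp u from funext fun u => neg_add_eq_sub _ _] at h
  refine ConcaveOn.comp_strictConcaveOn (g := log) ?_ hsub ?_
  · rw [image_one_sub_exp_Iio_zero]
    exact strictConcaveOn_log_Ioi.concaveOn.subset Ioo_subset_Ioi_self (convex_Ioo 0 1)
  · rw [image_one_sub_exp_Iio_zero]
    exact strictMonoOn_log.mono Ioo_subset_Ioi_self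

theorem log_log_one_sub_not_collinear {s₁ s₂ s₃ : ℝ} (hs₁ : s₁ ∈ Ioo 0 1) (hs₂ : s₂ ∈ Ioo 0 1)
    (hs₃ : s₃ ∈ Ioo 0 1) (h₁₂ : s₁ ≠ s₂) (h₁₃ : s₁ ≠ s₃) (h₂₃ : s₂ ≠ s₃) :
    (log s₂ - log s₁) * (log (1 - s₃) - log (1 - s₁)) ≠
      (log s₃ - log s₁) * (log (1 - s₂) - log (1 - s₁)) := by
  have hlog_one_sub : ∀ s ∈ Ioo (0 : ℝ) 1, log (1 - s) = log (1 - exp (log s)) :=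
    fun s hs => by rw [exp_log hs.1]
  have hlog_neg : ∀ s ∈ Ioo (0 : ℝ) 1, log s ∈ Iio 0 := fun s hs => log_neg hs.1 hs.2
  rw [hlog_one_sub s₁ hs₁, hlog_one_sub s₂ hs₂, hlog_one_sub s₃ hs₃]
  exact strictConcaveOn_log_one_sub_exp.sub_mul_sub_ne (hlog_neg s₁ hs₁) (hlog_neg s₂ hs₂)
    (hlog_neg s₃ hs₃) (log_injOn_pos.ne hs₂.1 hs₁.1 h₁₂.symm)
    (log_injOn_pos.ne hs₃.1 hs₁.1 h₁₃.symm) (log_injOn_pos.ne hs₂.1 hs₃.1 h₂₃)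

theorem calCurve_eq_one_div_one_add_exp {α β c s : ℝ} (hs : s ∈ Ioo 0 1) :
    calCurve α β c s = 1 / (1 + exp (-α * log s + β * log (1 - s) + c)) := by
  rw [calCurve, rpow_def_of_pos hs.1, rpow_def_of_pos (sub_pos.2 hs.2), ← exp_add, ← exp_add]
  ring_nf

theorem one_div_one_add_exp_eq_iff {x y : ℝ} (hy : y ∈ Ioo 0 1) :
    1 / (1 + exp x) = y ↔ x = log (1 / y - 1) := by
  have hy₀ : y ≠ 0 := hy.1.ne'
  have hpos : 0 < 1 / y - 1 := by rw [sub_pos, lt_div_iff₀ hy.1, one_mul]; exact hy.2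
  conv_rhs => rw [← exp_eq_exp, exp_log hpos]
  rw [div_eq_iff (by positivity), eq_sub_iff_add_eq, eq_div_iff hy₀]
  constructor <;> intro h <;> linear_combination -h

theorem calCurve_eq_iff {α β c s y : ℝ} (hs : s ∈ Ioo 0 1) (hy : y ∈ Ioo 0 1) :
    calCurve α β c s = y ↔ -α * log s + β * log (1 - s) + c = log (1 / y - 1) := by
  rw [calCurve_eq_one_div_one_add_exp hs, one_div_one_add_exp_eq_iff hy]

/-- For pairwise distinct `s₁, s₂, s₃ ∈ (0,1)` and arbitrary `y₁, y₂, y₃ ∈ (0,1)`, there exists a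
unique triple `(α, β, c)` with `g(sᵢ; α, β, c) = yᵢ` for `i = 1, 2, 3`; equivalently, the linear
system `−α·ln(sᵢ) + β·ln(1−sᵢ) + c = ln(1/yᵢ − 1)` has a unique solution `(α, β, c)`. -/
theorem calCurve_exists_unique_interpolation (s₁ s₂ s₃ : ℝ)
    (hs₁ : s₁ ∈ Set.Ioo (0:ℝ) 1) (hs₂ : s₂ ∈ Set.Ioo (0:ℝ) 1) (hs₃ : s₃ ∈ Set.Ioo (0:ℝ) 1)
    (h₁₂ : s₁ ≠ s₂) (h₁₃ : s₁ ≠ s₃) (h₂₃ : s₂ ≠ s₃)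
    (y₁ y₂ y₃ : ℝ)
    (hy₁ : y₁ ∈ Set.Ioo (0:ℝ) 1) (hy₂ : y₂ ∈ Set.Ioo (0:ℝ) 1) (hy₃ : y₃ ∈ Set.Ioo (0:ℝ) 1) :
    (∃! t : ℝ × ℝ × ℝ,
      calCurve t.1 t.2.1 t.2.2 s₁ = y₁ ∧
      calCurve t.1 t.2.1 t.2.2 s₂ = y₂ ∧
      calCurve t.1 t.2.1 t.2.2 s₃ = y₃) ∧
    (∃! t : ℝ × ℝ × ℝ,
      -t.1 * Real.log s₁ + t.2.1 * Real.log (1 - s₁) + t.2.2 = Real.log (1 / y₁ - 1) ∧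
      -t.1 * Real.log s₂ + t.2.1 * Real.log (1 - s₂) + t.2.2 = Real.log (1 / y₂ - 1) ∧
      -t.1 * Real.log s₃ + t.2.1 * Real.log (1 - s₃) + t.2.2 = Real.log (1 / y₃ - 1)) := by
  refine (and_iff_right_of_imp fun hlinear => ?_).2 ?_
  · simpa only [calCurve_eq_iff hs₁ hy₁, calCurve_eq_iff hs₂ hy₂, calCurve_eq_iff hs₃ hy₃]
      using hlinear
  · simp only [neg_mul_comm]
    refine existsUnique_affine_interpolation fun h => ?_
    exact log_log_one_sub_not_collinear hs₁ hs₂ hs₃ h₁₂ h₁₃ h₂₃ (by linear_combination -h)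
end

section
/- For any pairwise distinct s₁, s₂, s₃ ∈ (0,1), the three vectors (−ln(sᵢ), ln(1−sᵢ), 1) ∈ ℝ³, i = 1, 2, 3, are linearly independent; equivalently, the 3×3 matrix with rows (−ln(sᵢ), ln(1−sᵢ), 1) is invertible. -/
/-!
If `a ln t + b ln(1 - t) + c` vanished at three points of `(0, 1)`, Rolle's theorem would give two
distinct zeros of its derivative `a / t - b / (1 - t)`, i.e. two roots of the linear polynomial
`a - (a + b) t`; hence `a = b = 0`, and then `c = 0`. So no nonzero vector `(a, b, c)` is orthogonal
to all three rows, and the matrix is invertible.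
-/

open Real Set

theorem hasDerivAt_log_comb (a b c : ℝ) {t : ℝ} (ht₀ : t ≠ 0) (ht₁ : t ≠ 1) :
    HasDerivAt (fun t => a * log t + b * log (1 - t) + c) (a / t - b / (1 - t)) t := by
  have h₁ : HasDerivAt (fun t : ℝ => log (1 - t)) (-1 / (1 - t)) t := by
    simpa using ((hasDerivAt_id t).const_sub 1).log (sub_ne_zero.mpr ht₁.symm)
  exact (((hasDerivAt_log ht₀).const_mul a).add (h₁.const_mul b)).add_const c |>.congr_deriv
    (by ring)

theorem exists_log_comb_deriv_root {a b c x y : ℝ} (hx : 0 < x) (hxy : x < y) (hy : y < 1)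
    (hfxy : a * log x + b * log (1 - x) + c = a * log y + b * log (1 - y) + c) :
    ∃ t ∈ Ioo x y, a = (a + b) * t := by
  have hderiv : ∀ t ∈ Ioo 0 1, HasDerivAt (fun t => a * log t + b * log (1 - t) + c)
      (a / t - b / (1 - t)) t :=
    fun t ht => hasDerivAt_log_comb a b c ht.1.ne' ht.2.ne
  have hIcc : Icc x y ⊆ Ioo 0 1 := Icc_subset_Ioo hx hy
  obtain ⟨t, ht, hroot⟩ := exists_hasDerivAt_eq_zero hxy
    (fun t ht => (hderiv t (hIcc ht)).continuousAt.continuousWithinAt) hfxy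
    (fun t ht => hderiv t (hIcc (Ioo_subset_Icc_self ht)))
  have ht₀ : t ≠ 0 := (hx.trans ht.1).ne'
  have ht₁ : 1 - t ≠ 0 := sub_ne_zero.mpr (ht.2.trans hy).ne'
  refine ⟨t, ht, ?_⟩
  field_simp at hroot
  linarith

theorem log_comb_eq_zero_of_lt {a b c u v w : ℝ} (hu : 0 < u) (huv : u < v) (hvw : v < w)
    (hw : w < 1) (hfu : a * log u + b * log (1 - u) + c = 0)
    (hfv : a * log v + b * log (1 - v) + c = 0) (hfw : a * log w + b * log (1 - w) + c = 0) :
    a = 0 ∧ b = 0 ∧ c = 0 := by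
  obtain ⟨t₁, ht₁, h₁⟩ := exists_log_comb_deriv_root hu huv (hvw.trans hw) (hfu.trans hfv.symm)
  obtain ⟨t₂, ht₂, h₂⟩ := exists_log_comb_deriv_root (hu.trans huv) hvw hw (hfv.trans hfw.symm)
  have hab : a + b = 0 := by
    by_contra hab
    exact (ht₁.2.trans ht₂.1).ne (mul_left_cancel₀ hab (h₁.symm.trans h₂))
  have ha : a = 0 := by rw [h₁, hab, zero_mul]
  have hb : b = 0 := by linarith
  subst ha hb
  exact ⟨rfl, rfl, by simpa using hfu⟩

theorem log_comb_eq_zero_of_injective {a b c : ℝ} {s : Fin 3 → ℝ} (hs : ∀ i, s i ∈ Ioo 0 1)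
    (hinj : Function.Injective s) (hf : ∀ i, a * log (s i) + b * log (1 - s i) + c = 0) :
    a = 0 ∧ b = 0 ∧ c = 0 := by
  set σ := Tuple.sort s
  have hmono : StrictMono (s ∘ σ) :=
    (Tuple.monotone_sort s).strictMono_of_injective (hinj.comp σ.injective)
  exact log_comb_eq_zero_of_lt (hs (σ 0)).1 (hmono (by decide : (0 : Fin 3) < 1))
    (hmono (by decide : (1 : Fin 3) < 2)) (hs (σ 2)).2 (hf _) (hf _) (hf _)

/-- For pairwise distinct `s₁, s₂, s₃ ∈ (0,1)`, the three vectors `(−ln(sᵢ), ln(1−sᵢ), 1) ∈ ℝ³`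
are linearly independent; equivalently, the `3×3` matrix with these rows is invertible. -/
theorem log_vectors_linearIndependent (s : Fin 3 → ℝ)
    (hs : ∀ i, s i ∈ Set.Ioo (0:ℝ) 1) (hinj : Function.Injective s) :
    LinearIndependent ℝ (fun i : Fin 3 => ![-Real.log (s i), Real.log (1 - s i), (1:ℝ)]) ∧
    IsUnit (Matrix.of fun i j : Fin 3 => ![-Real.log (s i), Real.log (1 - s i), (1:ℝ)] j) := by
  set M : Matrix (Fin 3) (Fin 3) ℝ :=
    Matrix.of fun i j : Fin 3 => ![-Real.log (s i), Real.log (1 - s i), (1:ℝ)] j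
  have hdet : M.det ≠ 0 := by
    intro hdet
    obtain ⟨v, hv, hMv⟩ := Matrix.exists_mulVec_eq_zero_iff.mpr hdet
    have hf : ∀ i, -v 0 * log (s i) + v 1 * log (1 - s i) + v 2 = 0 := fun i => by
      simpa [M, Matrix.mulVec, dotProduct, Fin.sum_univ_three, mul_comm] using congrFun hMv i
    obtain ⟨h₀, h₁, h₂⟩ := log_comb_eq_zero_of_injective hs hinj hf
    exact hv (by ext i; fin_cases i <;> simp_all)
  have hM : IsUnit M := (Matrix.isUnit_iff_isUnit_det M).mpr hdet.isUnit
  exact ⟨Matrix.linearIndependent_rows_iff_isUnit.mpr hM, hM⟩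
end
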